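/- Let V be a Volterra operator with a_{ki} < 0 for all k < i and suppose sup_{i>k} a_{ki} < 0 for each k. If x ∈ S has infinite support, then Vⁿ(x) converges pointwise to the zero sequence. -/

import Mathlib

/-!
Skew-symmetry makes the quadratic form `∑ₖ xₖ ∑ᵢ aₖᵢ xᵢ` vanish, so `V` preserves the simplex, and
for a block `{0, …, m-1}` it makes the interaction inside the block cancel. The mass `H` of the block
therefore changes only through its interaction with the tail, whose coefficients are `≤ c < 0`
(uniformly, as there are finitely many rows), giving `H(Vx) ≤ H(x) (1 + c (1 - H(x)))`.
Infinite support makes `H(x) < 1`, so `H` decreases geometrically along the orbit and every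
coordinate in the block tends to `0`.
-/

open Filter Topology Finset

structure MemSimplex {ι : Type*} (x : ι → ℝ) : Prop where
  nonneg : ∀ i, 0 ≤ x i
  summable : Summable x
  tsum_eq_one : ∑' i, x i = 1

noncomputable def volterra {ι : Type*} (a : ι → ι → ℝ) (x : ι → ℝ) : ι → ℝ :=
  fun k => x k * (1 + ∑' i, a k i * x i)

section Skew

variable {ι : Type*} {x : ι → ℝ}

lemma norm_mul_le_of_abs_le_one {b : ι → ℝ} (hb : ∀ i, |b i| ≤ 1) (hx0 : ∀ i, 0 ≤ x i) (i : ι) :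
    ‖b i * x i‖ ≤ x i := by
  rw [Real.norm_eq_abs, abs_mul, abs_of_nonneg (hx0 i)]
  exact mul_le_of_le_one_left (hx0 i) (hb i)

lemma summable_mul_of_abs_le_one {b : ι → ℝ} (hb : ∀ i, |b i| ≤ 1) (hx0 : ∀ i, 0 ≤ x i)
    (hx : Summable x) : Summable fun i => b i * x i :=
  hx.of_norm_bounded (norm_mul_le_of_abs_le_one hb hx0)

lemma abs_tsum_mul_le_tsum {b : ι → ℝ} (hb : ∀ i, |b i| ≤ 1) (hx0 : ∀ i, 0 ≤ x i)
    (hx : Summable x) : |∑' i, b i * x i| ≤ ∑' i, x i :=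
  calc |∑' i, b i * x i| = ‖∑' i, b i * x i‖ := (Real.norm_eq_abs _).symm
    _ ≤ ∑' i, ‖b i * x i‖ :=
      norm_tsum_le_tsum_norm (hx.of_nonneg_of_le (fun _ => norm_nonneg _)
        (norm_mul_le_of_abs_le_one hb hx0))
    _ ≤ ∑' i, x i := (hx.of_nonneg_of_le (fun _ => norm_nonneg _)
        (norm_mul_le_of_abs_le_one hb hx0)).tsum_le_tsum (norm_mul_le_of_abs_le_one hb hx0) hx

variable {a : ι → ι → ℝ}

lemma sum_sum_mul_eq_zero_of_skew (hskew : ∀ k i, a k i = -a i k) (s : Finset ι) :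
    ∑ i ∈ s, ∑ j ∈ s, x i * (a i j * x j) = 0 := by
  have h : ∑ i ∈ s, ∑ j ∈ s, x i * (a i j * x j) = -∑ i ∈ s, ∑ j ∈ s, x i * (a i j * x j) := by
    conv_lhs => rw [Finset.sum_comm]
    simp only [← Finset.sum_neg_distrib]
    refine sum_congr rfl fun i _ => sum_congr rfl fun j _ => ?_
    rw [hskew j i]
    ring
  linarith

lemma tsum_mul_tsum_eq_zero_of_skew (hskew : ∀ k i, a k i = -a i k) (hbd : ∀ k i, |a k i| ≤ 1)
    (hx0 : ∀ i, 0 ≤ x i) (hx : Summable x) :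
    ∑' k, x k * ∑' i, a k i * x i = 0 := by
  set g : ι × ι → ℝ := fun p => x p.1 * (a p.1 p.2 * x p.2)
  have hg : Summable g := (hx.mul_of_nonneg hx hx0 hx0).of_norm_bounded fun p => by
    simp only [g, norm_mul, Real.norm_eq_abs, abs_of_nonneg (hx0 _)]
    exact mul_le_mul_of_nonneg_left (mul_le_of_le_one_left (hx0 _) (hbd _ _)) (hx0 _)
  have hswap : ∑' p, g p = -∑' p, g p := by
    rw [← tsum_neg, ← (Equiv.prodComm ι ι).tsum_eq g]
    congr 1
    ext p
    simp only [g, Equiv.prodComm_apply, Prod.fst_swap, Prod.snd_swap, hskew p.2 p.1]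
    ring
  calc ∑' k, x k * ∑' i, a k i * x i = ∑' p, g p := by
        rw [hg.tsum_prod' fun k => (summable_mul_of_abs_le_one (hbd k) hx0 hx).mul_left (x k)]
        simp only [g, tsum_mul_left]
    _ = 0 := by linarith

lemma MemSimplex.abs_tsum_mul_le_one (hbd : ∀ k i, |a k i| ≤ 1) (hx : MemSimplex x) (k : ι) :
    |∑' i, a k i * x i| ≤ 1 :=
  hx.tsum_eq_one ▸ abs_tsum_mul_le_tsum (hbd k) hx.nonneg hx.summable

lemma MemSimplex.volterra (hskew : ∀ k i, a k i = -a i k) (hbd : ∀ k i, |a k i| ≤ 1)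
    (hx : MemSimplex x) : MemSimplex (volterra a x) := by
  have hF := hx.abs_tsum_mul_le_one hbd
  have hsplit : _root_.volterra a x = x + fun k => x k * ∑' i, a k i * x i := by
    ext k
    simp only [_root_.volterra, Pi.add_apply]
    ring
  have hquad : Summable fun k => x k * ∑' i, a k i * x i := by
    simpa only [mul_comm] using summable_mul_of_abs_le_one hF hx.nonneg hx.summable
  refine ⟨fun k => mul_nonneg (hx.nonneg k) (by linarith [(abs_le.1 (hF k)).1]), ?_, ?_⟩
  · rw [hsplit]
    exact hx.summable.add hquad
  · rw [hsplit, Pi.add_def, hx.summable.tsum_add hquad, hx.tsum_eq_one,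
      tsum_mul_tsum_eq_zero_of_skew hskew hbd hx.nonneg hx.summable, add_zero]

end Skew

section Head

variable {a : ℕ → ℕ → ℝ} {x : ℕ → ℝ}

lemma MemSimplex.sum_range_lt_one (hx : MemSimplex x) {m j : ℕ} (hj : m ≤ j) (hxj : x j ≠ 0) :
    ∑ i ∈ range m, x i < 1 := by
  have hjm : j ∉ range m := by simpa using hj
  have h := hx.summable.sum_le_tsum (insert j (range m)) fun i _ => hx.nonneg i
  rw [sum_insert hjm, hx.tsum_eq_one] at h
  linarith [lt_of_le_of_ne (hx.nonneg j) (Ne.symm hxj)]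

lemma exists_neg_bound_of_rows (hsup : ∀ k, ∃ c < (0 : ℝ), ∀ i, k < i → a k i ≤ c) (m : ℕ) :
    ∃ c < (0 : ℝ), ∀ i j, i < m → m ≤ j → a i j ≤ c := by
  induction m with
  | zero => exact ⟨-1, by norm_num, fun i _ hi _ => absurd hi (Nat.not_lt_zero i)⟩
  | succ m ih =>
    obtain ⟨c, hc0, hc⟩ := ih
    obtain ⟨d, hd0, hd⟩ := hsup m
    refine ⟨max c d, max_lt hc0 hd0, fun i j hi hj => ?_⟩
    rcases Nat.lt_succ_iff_lt_or_eq.1 hi with hi | rfl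
    · exact (hc i j hi (by omega)).trans (le_max_left c d)
    · exact (hd j (by omega)).trans (le_max_right c d)

lemma sum_range_volterra_le (hskew : ∀ k i, a k i = -a i k) (hbd : ∀ k i, |a k i| ≤ 1)
    (hx : MemSimplex x) {m : ℕ} {c : ℝ} (hc : ∀ i j, i < m → m ≤ j → a i j ≤ c) :
    ∑ i ∈ range m, volterra a x i ≤
      (∑ i ∈ range m, x i) * (1 + c * (1 - ∑ i ∈ range m, x i)) := by
  set H := ∑ i ∈ range m, x i
  have htail : ∑' j, x (j + m) = 1 - H := by
    rw [← hx.tsum_eq_one, ← hx.summable.sum_add_tsum_nat_add m]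
    ring
  have hrow : ∀ i, Summable fun j => a i j * x j :=
    fun i => summable_mul_of_abs_le_one (hbd i) hx.nonneg hx.summable
  have htail_le : ∀ i < m, ∑' j, a i (j + m) * x (j + m) ≤ c * (1 - H) := fun i hi => by
    rw [← htail, ← tsum_mul_left]
    exact ((summable_nat_add_iff m).2 (hrow i)).tsum_le_tsum
      (fun j => mul_le_mul_of_nonneg_right (hc i _ hi (Nat.le_add_left m j)) (hx.nonneg _))
      ((summable_nat_add_iff m).2 hx.summable |>.mul_left c)
  have hexpand : ∀ i, volterra a x i = x i + ∑ j ∈ range m, x i * (a i j * x j) +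
      x i * ∑' j, a i (j + m) * x (j + m) := fun i => by
    rw [volterra, ← (hrow i).sum_add_tsum_nat_add m, ← mul_sum]
    ring
  calc ∑ i ∈ range m, volterra a x i
      = H + ∑ i ∈ range m, x i * ∑' j, a i (j + m) * x (j + m) := by
        simp only [hexpand, sum_add_distrib, sum_sum_mul_eq_zero_of_skew hskew, add_zero, H]
    _ ≤ H + ∑ i ∈ range m, x i * (c * (1 - H)) := by
        gcongr with i hi
        · exact hx.nonneg i
        · exact htail_le i (mem_range.1 hi)
    _ = H * (1 + c * (1 - H)) := by rw [← sum_mul]; ring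

end Head

lemma tendsto_zero_of_le_mul_one_add_mul_one_sub {h : ℕ → ℝ} {c : ℝ} (hc : c < 0)
    (h0 : ∀ n, 0 ≤ h n) (h1 : h 0 < 1) (hstep : ∀ n, h (n + 1) ≤ h n * (1 + c * (1 - h n))) :
    Tendsto h atTop (𝓝 0) := by
  set r := max (1 + c * (1 - h 0)) 0
  have hr0 : 0 ≤ r := le_max_right _ _
  have hr1 : r < 1 := max_lt (by nlinarith) one_pos
  have hgeom : ∀ n, h n ≤ h 0 * r ^ n := fun n => by
    induction n with
    | zero => simp
    | succ n ih =>
      have hle : h n ≤ h 0 := ih.trans (mul_le_of_le_one_right (h0 0) (pow_le_one₀ hr0 hr1.le))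
      calc h (n + 1) ≤ h n * (1 + c * (1 - h n)) := hstep n
        _ ≤ h n * r := mul_le_mul_of_nonneg_left (le_max_of_le_left (by nlinarith)) (h0 n)
        _ ≤ h 0 * r ^ n * r := mul_le_mul_of_nonneg_right ih hr0
        _ = h 0 * r ^ (n + 1) := by ring
  exact squeeze_zero h0 hgeom
    (by simpa using (tendsto_pow_atTop_nhds_zero_of_lt_one hr0 hr1).const_mul (h 0))

theorem stmt_17_general (a : ℕ → ℕ → ℝ)
    (hskew : ∀ k i, a k i = -a i k) (hbd : ∀ k i, |a k i| ≤ 1)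
    (hsup : ∀ k, ∃ c < (0 : ℝ), ∀ i, k < i → a k i ≤ c)
    (V : (ℕ → ℝ) → (ℕ → ℝ))
    (hV : ∀ x k, V x k = x k * (1 + ∑' i, a k i * x i))
    (x : ℕ → ℝ) (hx : (∀ k, 0 ≤ x k) ∧ Summable x ∧ ∑' k, x k = 1)
    (hsupp : {i | x i ≠ 0}.Infinite) :
    ∀ k, Tendsto (fun n => (V^[n] x) k) atTop (𝓝 0) := by
  obtain rfl : V = volterra a := funext fun y => funext (hV y)
  have horbit : ∀ n, MemSimplex ((volterra a)^[n] x) := fun n => by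
    induction n with
    | zero => exact ⟨hx.1, hx.2.1, hx.2.2⟩
    | succ n ih => rw [Function.iterate_succ_apply']; exact ih.volterra hskew hbd
  intro k
  obtain ⟨c, hc0, hc⟩ := exists_neg_bound_of_rows hsup (k + 1)
  obtain ⟨j, hxj, hkj⟩ := hsupp.exists_gt k
  have hhead : Tendsto (fun n => ∑ i ∈ range (k + 1), (volterra a)^[n] x i) atTop (𝓝 0) :=
    tendsto_zero_of_le_mul_one_add_mul_one_sub hc0
      (fun n => sum_nonneg fun i _ => (horbit n).nonneg i)
      ((horbit 0).sum_range_lt_one hkj hxj) fun n => by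
        rw [Function.iterate_succ_apply']
        exact sum_range_volterra_le hskew hbd (horbit n) hc
  exact squeeze_zero (fun n => (horbit n).nonneg k)
    (fun n => single_le_sum (fun i _ => (horbit n).nonneg i) (self_mem_range_succ k)) hhead

theorem stmt_17 (a : ℕ → ℕ → ℝ)
    (hskew : ∀ k i, a k i = -a i k) (hbd : ∀ k i, |a k i| ≤ 1)
    (hneg : ∀ k i, k < i → a k i < 0)
    (hsup : ∀ k, ∃ c < (0 : ℝ), ∀ i, k < i → a k i ≤ c)
    (V : (ℕ → ℝ) → (ℕ → ℝ))
    (hV : ∀ x k, V x k = x k * (1 + ∑' i, a k i * x i))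
    (x : ℕ → ℝ) (hx : (∀ k, 0 ≤ x k) ∧ Summable x ∧ ∑' k, x k = 1)
    (hsupp : {i | x i ≠ 0}.Infinite) :
    ∀ k, Tendsto (fun n => (V^[n] x) k) atTop (𝓝 0) :=
  stmt_17_general a hskew hbd hsup V hV x hx hsupp
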